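/- arXiv:1601.00404 — 2 statements merged into one kernel-verified Lean document; each statement's English description precedes it below -/
import Mathlib

section
/- Let g ≥ 1 and N ≥ 2 be integers. Let α = [[A,B],[U,V]] ∈ M_{2g}(ℤ) (with g×g blocks A, B, U, V) be such that its entrywise reduction ᾱ modulo N satisfies ᾱᵀ J ᾱ = ν·J for some unit ν of ℤ/Nℤ. Then there exist matrices C, D ∈ M_g(ℤ) such that the entrywise reduction modulo N of γ = [[A,B],[C,D]] lies in Sp_{2g}(ℤ/Nℤ); that is, γ̄ᵀ J γ̄ = J in M_{2g}(ℤ/Nℤ). -/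
open Matrix
/-- The standard symplectic form matrix `J = [[0, -I_g],[I_g, 0]]` over a commutative ring. -/
def symplJ (R : Type*) [CommRing R] (g : ℕ) :
    Matrix (Fin g ⊕ Fin g) (Fin g ⊕ Fin g) R :=
  Matrix.fromBlocks 0 (-1) 1 0

/-- If `α = [[A,B],[U,V]] ∈ M_{2g}(ℤ)` has reduction mod `N` lying in
`GSp_{2g}(ℤ/Nℤ)` with multiplier a unit `ν`, then the blocks `C, D` can be chosen so that
`γ = [[A,B],[C,D]]` reduces mod `N` to an element of `Sp_{2g}(ℤ/Nℤ)`. -/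
theorem exists_symplectic_completion_mod
    (g N : ℕ) (hg : 1 ≤ g) (hN : 2 ≤ N)
    (A B U V : Matrix (Fin g) (Fin g) ℤ) (ν : (ZMod N)ˣ)
    (hα : ((Matrix.fromBlocks A B U V).map (Int.cast : ℤ → ZMod N))ᵀ *
            symplJ (ZMod N) g *
            ((Matrix.fromBlocks A B U V).map (Int.cast : ℤ → ZMod N))
          = (ν : ZMod N) • symplJ (ZMod N) g) :
    ∃ C D : Matrix (Fin g) (Fin g) ℤ,
      ((Matrix.fromBlocks A B C D).map (Int.cast : ℤ → ZMod N))ᵀ *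
          symplJ (ZMod N) g *
          ((Matrix.fromBlocks A B C D).map (Int.cast : ℤ → ZMod N))
        = symplJ (ZMod N) g := by
  haveI : NeZero N := ⟨by omega⟩
  set c : ZMod N := ((ν⁻¹ : (ZMod N)ˣ) : ZMod N) with hc
  refine ⟨((c • U.map (Int.cast : ℤ → ZMod N)).map (fun x => (ZMod.cast x : ℤ))),
          ((c • V.map (Int.cast : ℤ → ZMod N)).map (fun x => (ZMod.cast x : ℤ))), ?_⟩
  have hmap : ∀ (W : Matrix (Fin g) (Fin g) ℤ),
      (((c • W.map (Int.cast : ℤ → ZMod N)).map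
        (fun x => (ZMod.cast x : ℤ))).map (Int.cast : ℤ → ZMod N))
        = c • W.map (Int.cast : ℤ → ZMod N) := by
    intro W
    ext i j
    simp [Matrix.map_apply, ZMod.intCast_zmod_cast]
  set A' := A.map (Int.cast : ℤ → ZMod N)
  set B' := B.map (Int.cast : ℤ → ZMod N)
  set U' := U.map (Int.cast : ℤ → ZMod N)
  set V' := V.map (Int.cast : ℤ → ZMod N)
  rw [Matrix.fromBlocks_map, hmap U, hmap V]
  rw [Matrix.fromBlocks_map] at hα
  set J := symplJ (ZMod N) g with hJ
  set α' := Matrix.fromBlocks A' B' U' V' with hα'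
  set M : Matrix (Fin g ⊕ Fin g) (Fin g ⊕ Fin g) (ZMod N) :=
    Matrix.fromBlocks 1 0 0 (c • 1) with hM
  have hfact : Matrix.fromBlocks A' B' (c • U') (c • V') = M * α' := by
    rw [hM, hα']
    simp [Matrix.fromBlocks_multiply, smul_mul_assoc]
  have hMJM : Mᵀ * J * M = c • J := by
    rw [hM, hJ, symplJ]
    simp [Matrix.fromBlocks_transpose, Matrix.fromBlocks_multiply,
      Matrix.fromBlocks_smul, smul_mul_assoc, mul_smul_comm]
  rw [hfact, Matrix.transpose_mul]
  calc α'ᵀ * Mᵀ * J * (M * α')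
      = α'ᵀ * (Mᵀ * J * M) * α' := by
        simp only [Matrix.mul_assoc]
    _ = α'ᵀ * (c • J) * α' := by rw [hMJM]
    _ = c • (α'ᵀ * J * α') := by
        rw [Matrix.mul_smul, Matrix.smul_mul]
    _ = c • ((ν : ZMod N) • J) := by rw [hα]
    _ = J := by
        rw [smul_smul, hc, Units.inv_mul, one_smul]
end

section
/- Let g ≥ 1 and N ≥ 1 be integers. The entrywise reduction map modulo N from Sp_{2g}(ℤ) to Sp_{2g}(ℤ/Nℤ) is surjective: for every δ ∈ M_{2g}(ℤ/Nℤ) with δᵀ J δ = J, there exists γ ∈ M_{2g}(ℤ) with γᵀ J γ = J whose entrywise reduction modulo N equals δ. -/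
/-!
Over a ring `S` with finitely many maximal ideals, `Sp_{2g}(S)` is generated by the symplectic
transvections `x ↦ x + c ω(u, x) u`. Induct on the set `s` of hyperbolic planes `⟨e_k, f_k⟩` that
a symplectic `A` does not fix: for `k ∈ s`, transvections along vectors in the span of the planes
in `s` carry `(A e_k, A f_k)` back to `(e_k, f_k)` without disturbing the other planes. The one
step that needs the ring to be semilocal is moving `A e_k` to `e_k`, which goes through a vector
`z` with `ω(z, A e_k)` and `ω(e_k, z)` both units; such a `z` is found modulo each maximal ideal
and glued by the Chinese remainder theorem. Transvections lift along the surjection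
`ℤ → ℤ/Nℤ`, hence so does all of `Sp_{2g}(ℤ/Nℤ)`.
-/

open Matrix

theorem exists_isUnit_mul_add_mul {R : Type*} [CommRing R] [Finite (MaximalSpectrum R)]
    {a b c d : R} (ha : IsUnit a) (hd : IsUnit d) :
    ∃ s t : R, IsUnit (s * a + t * b) ∧ IsUnit (s * c + t * d) := by
  have notMem {x : R} (hx : IsUnit x) (P : MaximalSpectrum R) : x ∉ P.asIdeal :=
    fun h ↦ P.isMaximal.ne_top (P.asIdeal.eq_top_of_isUnit_mem h hx)
  -- modulo each maximal ideal one of `(1, 0)`, `(0, 1)`, `(1, 1)` works; glue them by CRT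
  have local_choice (P : MaximalSpectrum R) :
      ∃ st : R × R, st.1 * a + st.2 * b ∉ P.asIdeal ∧ st.1 * c + st.2 * d ∉ P.asIdeal := by
    by_cases hc : c ∈ P.asIdeal
    · by_cases hb : b ∈ P.asIdeal
      · refine ⟨(1, 1), ?_, ?_⟩
        · simpa [P.asIdeal.add_mem_iff_left hb] using notMem ha P
        · simpa [P.asIdeal.add_mem_iff_right hc] using notMem hd P
      · exact ⟨(0, 1), by simpa using hb, by simpa using notMem hd P⟩
    · exact ⟨(1, 0), by simpa using notMem ha P, by simpa using hc⟩
  choose st hst using local_choice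
  have hcop : Pairwise (Function.onFun IsCoprime fun P : MaximalSpectrum R ↦ P.asIdeal) :=
    fun P Q hPQ ↦ Ideal.isCoprime_of_isMaximal (MaximalSpectrum.ext_iff.ne.mp hPQ)
  obtain ⟨s, hs⟩ := Ideal.exists_forall_sub_mem_ideal hcop fun P ↦ (st P).1
  obtain ⟨t, ht⟩ := Ideal.exists_forall_sub_mem_ideal hcop fun P ↦ (st P).2
  have isUnit_of_forall_notMem {x y : R}
      (hP : ∀ P : MaximalSpectrum R, (st P).1 * x + (st P).2 * y ∉ P.asIdeal) :
      IsUnit (s * x + t * y) := by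
    by_contra hu
    obtain ⟨I, hI, hmem⟩ := exists_max_ideal_of_mem_nonunits hu
    have hsub : s * x + t * y - ((st ⟨I, hI⟩).1 * x + (st ⟨I, hI⟩).2 * y) ∈ I := by
      rw [show ∀ s' t' : R, s * x + t * y - (s' * x + t' * y) = (s - s') * x + (t - t') * y
        from fun _ _ ↦ by ring]
      exact I.add_mem (I.mul_mem_right _ (hs ⟨I, hI⟩)) (I.mul_mem_right _ (ht ⟨I, hI⟩))
    exact hP ⟨I, hI⟩ (by simpa using I.sub_mem hmem hsub)
  exact ⟨s, t, isUnit_of_forall_notMem fun P ↦ (hst P).1,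
    isUnit_of_forall_notMem fun P ↦ (hst P).2⟩

namespace Matrix

variable {l R : Type*} [DecidableEq l] [CommRing R]

-- With `e_k = Pi.single (.inl k) 1` and `f_k = Pi.single (.inr k) 1`, this is the span of the
-- hyperbolic planes `⟨e_k, f_k⟩` for `k ∈ s`.
variable (R) in
def hyperbolicSpan (s : Finset l) : Submodule R (l ⊕ l → R) where
  carrier := {x | ∀ i ∉ s.disjSum s, x i = 0}
  add_mem' hx hy i hi := by simp [hx i hi, hy i hi]
  zero_mem' _ _ := rfl
  smul_mem' c x hx i hi := by simp [hx i hi]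

theorem single_mem_hyperbolicSpan {s : Finset l} {i : l ⊕ l} (hi : i ∈ s.disjSum s) :
    Pi.single i 1 ∈ hyperbolicSpan R s := fun j hj ↦ by
  rw [Pi.single_apply, if_neg (by rintro rfl; exact hj hi)]

variable [Fintype l]

def symplecticForm (x y : l ⊕ l → R) : R := x ⬝ᵥ J l R *ᵥ y

theorem J_mulVec_inl (y : l ⊕ l → R) (j : l) : (J l R *ᵥ y) (.inl j) = -y (.inr j) := by
  simp [J, fromBlocks_mulVec, neg_mulVec]

theorem J_mulVec_inr (y : l ⊕ l → R) (j : l) : (J l R *ᵥ y) (.inr j) = y (.inl j) := by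
  simp [J, fromBlocks_mulVec]

theorem symplecticForm_self (x : l ⊕ l → R) : symplecticForm x x = 0 := by
  simp [symplecticForm, dotProduct, Fintype.sum_sum_type, J_mulVec_inl, J_mulVec_inr, mul_comm]

theorem symplecticForm_comm (x y : l ⊕ l → R) : symplecticForm y x = -symplecticForm x y := by
  rw [symplecticForm, symplecticForm, dotProduct_comm, dotProduct_mulVec, ← mulVec_transpose,
    J_transpose, neg_mulVec, neg_dotProduct, neg_neg]

theorem symplecticForm_add_left (x y z : l ⊕ l → R) :
    symplecticForm (x + y) z = symplecticForm x z + symplecticForm y z := add_dotProduct ..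

theorem symplecticForm_sub_left (x y z : l ⊕ l → R) :
    symplecticForm (x - y) z = symplecticForm x z - symplecticForm y z := sub_dotProduct ..

theorem symplecticForm_smul_left (c : R) (x y : l ⊕ l → R) :
    symplecticForm (c • x) y = c * symplecticForm x y := smul_dotProduct ..

theorem symplecticForm_add_right (x y z : l ⊕ l → R) :
    symplecticForm x (y + z) = symplecticForm x y + symplecticForm x z := by
  simp [symplecticForm, mulVec_add]

theorem symplecticForm_smul_right (c : R) (x y : l ⊕ l → R) :
    symplecticForm x (c • y) = c * symplecticForm x y := by
  simp [symplecticForm, mulVec_smul]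

theorem symplecticForm_single_inl (j : l) (y : l ⊕ l → R) :
    symplecticForm (Pi.single (.inl j) 1) y = -y (.inr j) := by
  simp [symplecticForm, J_mulVec_inl]

theorem symplecticForm_single_inr (j : l) (y : l ⊕ l → R) :
    symplecticForm (Pi.single (.inr j) 1) y = y (.inl j) := by
  simp [symplecticForm, J_mulVec_inr]

theorem symplecticForm_single_inl_right (x : l ⊕ l → R) (j : l) :
    symplecticForm x (Pi.single (.inl j) 1) = x (.inr j) := by
  rw [symplecticForm_comm, symplecticForm_single_inl, neg_neg]

theorem symplecticForm_single_inr_right (x : l ⊕ l → R) (j : l) :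
    symplecticForm x (Pi.single (.inr j) 1) = -x (.inl j) := by
  rw [symplecticForm_comm, symplecticForm_single_inr]

theorem symplecticForm_mulVec_mulVec_eq (A : Matrix (l ⊕ l) (l ⊕ l) R) (x y : l ⊕ l → R) :
    symplecticForm (A *ᵥ x) (A *ᵥ y) = x ⬝ᵥ (Aᵀ * J l R * A) *ᵥ y := by
  rw [symplecticForm, dotProduct_mulVec, ← vecMul_transpose, vecMul_vecMul,
    ← dotProduct_mulVec, mulVec_mulVec]

theorem mem_symplecticGroup_iff_symplecticForm {A : Matrix (l ⊕ l) (l ⊕ l) R} :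
    A ∈ symplecticGroup l R ↔ ∀ x y, symplecticForm (A *ᵥ x) (A *ᵥ y) = symplecticForm x y := by
  simp_rw [SymplecticGroup.mem_iff', symplecticForm_mulVec_mulVec_eq, symplecticForm,
    ← Matrix.toBilin'_apply']
  exact ⟨fun h x y ↦ by rw [h], fun h ↦ Matrix.toBilin'.injective (LinearMap.ext₂ h)⟩

def symplecticTransvection (u : l ⊕ l → R) (c : R) : Matrix (l ⊕ l) (l ⊕ l) R :=
  1 + c • vecMulVec u (u ᵥ* J l R)

theorem symplecticTransvection_mulVec (u : l ⊕ l → R) (c : R) (x : l ⊕ l → R) :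
    symplecticTransvection u c *ᵥ x = x + (c * symplecticForm u x) • u := by
  simp [symplecticTransvection, add_mulVec, smul_mulVec, vecMulVec_mulVec, symplecticForm,
    dotProduct_mulVec, mul_smul]

theorem symplecticTransvection_mem (u : l ⊕ l → R) (c : R) :
    symplecticTransvection u c ∈ symplecticGroup l R := by
  rw [mem_symplecticGroup_iff_symplecticForm]
  intro x y
  simp only [symplecticTransvection_mulVec, symplecticForm_add_left, symplecticForm_add_right,
    symplecticForm_smul_left, symplecticForm_smul_right, symplecticForm_self]
  rw [symplecticForm_comm u x]
  ring

theorem symplecticTransvection_neg_mul (u : l ⊕ l → R) (c : R) :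
    symplecticTransvection u (-c) * symplecticTransvection u c = 1 := by
  refine Matrix.ext_iff_mulVec.mpr fun x ↦ ?_
  simp only [← mulVec_mulVec, symplecticTransvection_mulVec, one_mulVec, symplecticForm_add_right,
    symplecticForm_smul_right, symplecticForm_self]
  module

theorem map_symplecticTransvection {S : Type*} [CommRing S] (f : R →+* S) (u : l ⊕ l → R)
    (c : R) :
    (symplecticTransvection u c).map f = symplecticTransvection (f ∘ u) (f c) := by
  have hJ (a b : l ⊕ l) : f (J l R a b) = J l S a b := congrFun₂ (map_J l f) a b
  ext i j
  simp [symplecticTransvection, Matrix.one_apply, apply_ite f, vecMulVec_apply, vecMul,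
    dotProduct, hJ]

theorem symplecticTransvection_mulVec_of_symplecticForm_eq_zero {u x : l ⊕ l → R}
    (h : symplecticForm u x = 0) (c : R) : symplecticTransvection u c *ᵥ x = x := by
  rw [symplecticTransvection_mulVec, h, mul_zero, zero_smul, add_zero]

theorem exists_symplecticTransvection_mulVec_eq {x y : l ⊕ l → R}
    (h : IsUnit (symplecticForm y x)) : ∃ c, symplecticTransvection (y - x) c *ᵥ x = y := by
  refine ⟨↑h.unit⁻¹, ?_⟩
  rw [symplecticTransvection_mulVec, symplecticForm_sub_left, symplecticForm_self, sub_zero,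
    IsUnit.val_inv_mul, one_smul, add_sub_cancel]

variable (R) in
def fixingSubmonoid (s : Finset l) : Submonoid (Matrix (l ⊕ l) (l ⊕ l) R) where
  carrier := {A | ∀ i ∉ s.disjSum s, A *ᵥ Pi.single i 1 = Pi.single i 1}
  mul_mem' hA hB i hi := by rw [← mulVec_mulVec, hB i hi, hA i hi]
  one_mem' _ _ := one_mulVec _

variable (R) in
def transvectionClosure (s : Finset l) : Submonoid (Matrix (l ⊕ l) (l ⊕ l) R) :=
  Submonoid.closure {A | ∃ u ∈ hyperbolicSpan R s, ∃ c, symplecticTransvection u c = A}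

section TransvectionClosure

variable {s : Finset l}

theorem mulVec_mem_hyperbolicSpan {A : Matrix (l ⊕ l) (l ⊕ l) R} (hA : A ∈ symplecticGroup l R)
    (hfix : A ∈ fixingSubmonoid R s) {x : l ⊕ l → R} (hx : x ∈ hyperbolicSpan R s) :
    A *ᵥ x ∈ hyperbolicSpan R s := by
  rintro (j | j) hj
  · rw [← symplecticForm_single_inr j (A *ᵥ x), ← hfix (.inr j) (by simpa using hj),
      mem_symplecticGroup_iff_symplecticForm.mp hA, symplecticForm_single_inr, hx _ hj]
  · rw [← neg_eq_zero, ← symplecticForm_single_inl j (A *ᵥ x),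
      ← hfix (.inl j) (by simpa using hj), mem_symplecticGroup_iff_symplecticForm.mp hA,
      symplecticForm_single_inl, hx _ hj, neg_zero]

theorem symplecticTransvection_mem_fixingSubmonoid {u : l ⊕ l → R} (hu : u ∈ hyperbolicSpan R s)
    (c : R) : symplecticTransvection u c ∈ fixingSubmonoid R s := by
  rintro (j | j) hj <;> apply symplecticTransvection_mulVec_of_symplecticForm_eq_zero
  · rw [symplecticForm_single_inl_right, hu _ (by simpa using hj)]
  · rw [symplecticForm_single_inr_right, hu _ (by simpa using hj), neg_zero]

theorem symplecticTransvection_mem_transvectionClosure {u : l ⊕ l → R}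
    (hu : u ∈ hyperbolicSpan R s) (c : R) : symplecticTransvection u c ∈ transvectionClosure R s :=
  Submonoid.subset_closure ⟨u, hu, c, rfl⟩

theorem transvectionClosure_le_symplecticGroup :
    transvectionClosure R s ≤ symplecticGroup l R :=
  Submonoid.closure_le.mpr <| by rintro _ ⟨u, -, c, rfl⟩; exact symplecticTransvection_mem u c

theorem transvectionClosure_le_fixingSubmonoid :
    transvectionClosure R s ≤ fixingSubmonoid R s :=
  Submonoid.closure_le.mpr <| by
    rintro _ ⟨u, hu, c, rfl⟩; exact symplecticTransvection_mem_fixingSubmonoid hu c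

theorem transvectionClosure_mono {t : Finset l} (hst : s ⊆ t) :
    transvectionClosure R s ≤ transvectionClosure R t :=
  Submonoid.closure_mono <| by
    rintro _ ⟨u, hu, c, rfl⟩
    exact ⟨u, fun i hi ↦ hu i fun his ↦ hi (Finset.disjSum_mono hst hst his), c, rfl⟩

theorem exists_mul_eq_one_of_mem_transvectionClosure {τ : Matrix (l ⊕ l) (l ⊕ l) R}
    (hτ : τ ∈ transvectionClosure R s) : ∃ τ' ∈ transvectionClosure R s, τ' * τ = 1 := by
  induction hτ using Submonoid.closure_induction with
  | mem _ h =>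
    obtain ⟨u, hu, c, rfl⟩ := h
    exact ⟨_, symplecticTransvection_mem_transvectionClosure hu (-c),
      symplecticTransvection_neg_mul u c⟩
  | one => exact ⟨1, one_mem _, one_mul 1⟩
  | mul x y _ _ hx hy =>
    obtain ⟨x', hx', hxx'⟩ := hx
    obtain ⟨y', hy', hyy'⟩ := hy
    exact ⟨y' * x', mul_mem hy' hx', by rw [mul_assoc, ← mul_assoc x', hxx', one_mul, hyy']⟩

end TransvectionClosure

section Generation

variable {s : Finset l} {k : l}

theorem exists_mem_transvectionClosure_mulVec_eq_single_inl [Finite (MaximalSpectrum R)]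
    (hk : k ∈ s) {v w : l ⊕ l → R} (hv : v ∈ hyperbolicSpan R s) (hw : w ∈ hyperbolicSpan R s)
    (hvw : IsUnit (symplecticForm v w)) :
    ∃ τ ∈ transvectionClosure R s, τ *ᵥ v = Pi.single (.inl k) 1 := by
  set e : l ⊕ l → R := Pi.single (.inl k) 1
  set f : l ⊕ l → R := Pi.single (.inr k) 1
  have he : e ∈ hyperbolicSpan R s := single_mem_hyperbolicSpan (by simpa using hk)
  have hf : f ∈ hyperbolicSpan R s := single_mem_hyperbolicSpan (by simpa using hk)
  have hef : symplecticForm e f = -1 := by simp [e, f, symplecticForm_single_inl]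
  -- with `ω(z, v)` and `ω(e, z)` units, transvections carry `v` to `z` and then `z` to `e`
  obtain ⟨a, b, hzv, hez⟩ := exists_isUnit_mul_add_mul (b := symplecticForm f v)
    (c := symplecticForm e w) (symplecticForm_comm v w ▸ hvw.neg) (hef ▸ isUnit_one.neg)
  set z := a • w + b • f
  have hz : z ∈ hyperbolicSpan R s :=
    add_mem (Submodule.smul_mem _ _ hw) (Submodule.smul_mem _ _ hf)
  obtain ⟨c₁, hc₁⟩ := exists_symplecticTransvection_mulVec_eq (x := v) (y := z) <| by
    simpa [z, symplecticForm_add_left, symplecticForm_smul_left] using hzv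
  obtain ⟨c₂, hc₂⟩ := exists_symplecticTransvection_mulVec_eq (x := z) (y := e) <| by
    simpa [z, symplecticForm_add_right, symplecticForm_smul_right, mul_comm] using hez
  refine ⟨_, mul_mem (symplecticTransvection_mem_transvectionClosure (sub_mem he hz) c₂)
    (symplecticTransvection_mem_transvectionClosure (sub_mem hz hv) c₁), ?_⟩
  rw [← mulVec_mulVec, hc₁, hc₂]

theorem exists_mem_transvectionClosure_fixing_single_inl_mulVec_eq_single_inr
    (hk : k ∈ s) {w : l ⊕ l → R} (hw : w ∈ hyperbolicSpan R s)
    (hew : symplecticForm (Pi.single (.inl k) 1) w = -1) :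
    ∃ τ ∈ transvectionClosure R s,
      τ *ᵥ Pi.single (.inl k) 1 = Pi.single (.inl k) 1 ∧ τ *ᵥ w = Pi.single (.inr k) 1 := by
  set e : l ⊕ l → R := Pi.single (.inl k) 1
  set f : l ⊕ l → R := Pi.single (.inr k) 1
  have he : e ∈ hyperbolicSpan R s := single_mem_hyperbolicSpan (by simpa using hk)
  have hf : f ∈ hyperbolicSpan R s := single_mem_hyperbolicSpan (by simpa using hk)
  -- shearing along `e` makes `ω(f, w') = 1`, so that `w'` can be moved to `f` along `f - w'`
  set w' := symplecticTransvection e (w (.inl k) - 1) *ᵥ w with hw'_def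
  have hw' : w' = w - (w (.inl k) - 1) • e := by
    rw [hw'_def, symplecticTransvection_mulVec, hew, mul_neg_one, neg_smul, ← sub_eq_add_neg]
  have hfw' : symplecticForm f w' = 1 := by
    simp [hw', f, e, symplecticForm_single_inr]
  have hw'e : symplecticForm w' e = 1 := by
    rw [hw', symplecticForm_sub_left, symplecticForm_smul_left, symplecticForm_self,
      symplecticForm_comm, hew]
    ring
  obtain ⟨c, hc⟩ :=
    exists_symplecticTransvection_mulVec_eq (x := w') (y := f) (hfw' ▸ isUnit_one)
  have hw'_mem : w' ∈ hyperbolicSpan R s := hw' ▸ sub_mem hw (Submodule.smul_mem _ _ he)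
  refine ⟨symplecticTransvection (f - w') c * symplecticTransvection e (w (.inl k) - 1),
    mul_mem (symplecticTransvection_mem_transvectionClosure (sub_mem hf hw'_mem) c)
      (symplecticTransvection_mem_transvectionClosure he _), ?_, by rw [← mulVec_mulVec, hc]⟩
  rw [← mulVec_mulVec, symplecticTransvection_mulVec_of_symplecticForm_eq_zero
    (symplecticForm_self e), symplecticTransvection_mulVec_of_symplecticForm_eq_zero]
  rw [symplecticForm_sub_left, hw'e, symplecticForm_single_inr]
  simp [e]

theorem exists_mem_transvectionClosure_mulVec_eq_single [Finite (MaximalSpectrum R)]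
    (hk : k ∈ s) {v w : l ⊕ l → R} (hv : v ∈ hyperbolicSpan R s) (hw : w ∈ hyperbolicSpan R s)
    (hvw : symplecticForm v w = -1) :
    ∃ τ ∈ transvectionClosure R s,
      τ *ᵥ v = Pi.single (.inl k) 1 ∧ τ *ᵥ w = Pi.single (.inr k) 1 := by
  obtain ⟨τ₁, hτ₁, hv₁⟩ :=
    exists_mem_transvectionClosure_mulVec_eq_single_inl hk hv hw (hvw ▸ isUnit_one.neg)
  have hτ₁_symp := transvectionClosure_le_symplecticGroup hτ₁
  obtain ⟨τ₂, hτ₂, he₂, hw₂⟩ :=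
    exists_mem_transvectionClosure_fixing_single_inl_mulVec_eq_single_inr hk
      (mulVec_mem_hyperbolicSpan hτ₁_symp (transvectionClosure_le_fixingSubmonoid hτ₁) hw)
      (by rw [← hv₁, mem_symplecticGroup_iff_symplecticForm.mp hτ₁_symp, hvw])
  exact ⟨τ₂ * τ₁, mul_mem hτ₂ hτ₁, by rw [← mulVec_mulVec, hv₁, he₂],
    by rw [← mulVec_mulVec, hw₂]⟩

theorem mem_transvectionClosure_of_mem_fixingSubmonoid [Finite (MaximalSpectrum R)]
    (s : Finset l) {A : Matrix (l ⊕ l) (l ⊕ l) R} (hA : A ∈ symplecticGroup l R)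
    (hfix : A ∈ fixingSubmonoid R s) : A ∈ transvectionClosure R s := by
  induction s using Finset.induction_on generalizing A with
  | empty =>
    rw [ext_of_mulVec_single fun i ↦ (hfix i (by simp)).trans (one_mulVec _).symm]
    exact one_mem _
  | insert k s hks ih =>
    obtain ⟨τ, hτ, hτe, hτf⟩ :=
      exists_mem_transvectionClosure_mulVec_eq_single (Finset.mem_insert_self k s)
      (mulVec_mem_hyperbolicSpan hA hfix (single_mem_hyperbolicSpan (i := .inl k) (by simp)))
      (mulVec_mem_hyperbolicSpan hA hfix (single_mem_hyperbolicSpan (i := .inr k) (by simp)))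
      (by rw [mem_symplecticGroup_iff_symplecticForm.mp hA, symplecticForm_single_inl]; simp)
    have hτA : τ * A ∈ transvectionClosure R s := by
      refine ih (mul_mem (transvectionClosure_le_symplecticGroup hτ) hA) fun i hi ↦ ?_
      by_cases hik : i ∈ (insert k s).disjSum (insert k s)
      · rcases i with j | j <;> obtain rfl : j = k := by simp_all
        · rw [← mulVec_mulVec, hτe]
        · rw [← mulVec_mulVec, hτf]
      · rw [← mulVec_mulVec, hfix i hik, transvectionClosure_le_fixingSubmonoid hτ i hik]
    obtain ⟨τ', hτ', hτ'τ⟩ := exists_mul_eq_one_of_mem_transvectionClosure hτ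
    rw [← one_mul A, ← hτ'τ, mul_assoc]
    exact mul_mem hτ' (transvectionClosure_mono (Finset.subset_insert k s) hτA)

theorem symplecticGroup_le_transvectionClosure [Finite (MaximalSpectrum R)] :
    symplecticGroup l R ≤ transvectionClosure R Finset.univ :=
  fun _ hA ↦ mem_transvectionClosure_of_mem_fixingSubmonoid _ hA fun i hi ↦ by simp at hi

theorem symplecticGroup_le_map_of_surjective {S : Type*} [CommRing S]
    [Finite (MaximalSpectrum S)] {f : R →+* S} (hf : Function.Surjective f) :
    symplecticGroup l S ≤ (symplecticGroup l R).map f.mapMatrix := by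
  refine symplecticGroup_le_transvectionClosure.trans (Submonoid.closure_le.mpr ?_)
  rintro _ ⟨u, -, c, rfl⟩
  obtain ⟨u, rfl⟩ := hf.comp_left u
  obtain ⟨c, rfl⟩ := hf c
  exact ⟨_, symplecticTransvection_mem u c, map_symplecticTransvection f u c⟩

end Generation

end Matrix

theorem sp_reduction_surjective_general
    (g N : ℕ) (hN : 1 ≤ N)
    (δ : Matrix (Fin g ⊕ Fin g) (Fin g ⊕ Fin g) (ZMod N))
    (hδ : δᵀ * symplJ (ZMod N) g * δ = symplJ (ZMod N) g) :
    ∃ γ : Matrix (Fin g ⊕ Fin g) (Fin g ⊕ Fin g) ℤ,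
      γᵀ * symplJ ℤ g * γ = symplJ ℤ g ∧
      γ.map (Int.cast : ℤ → ZMod N) = δ := by
  have : NeZero N := ⟨by omega⟩
  obtain ⟨γ, hγ, hγδ⟩ := symplecticGroup_le_map_of_surjective
    (ZMod.ringHom_surjective (Int.castRingHom (ZMod N))) (SymplecticGroup.mem_iff'.mpr hδ)
  exact ⟨γ, SymplecticGroup.mem_iff'.mp hγ, hγδ⟩

/-- The reduction map `Sp_{2g}(ℤ) → Sp_{2g}(ℤ/Nℤ)` is surjective. -/
theorem sp_reduction_surjective
    (g N : ℕ) (hg : 1 ≤ g) (hN : 1 ≤ N)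
    (δ : Matrix (Fin g ⊕ Fin g) (Fin g ⊕ Fin g) (ZMod N))
    (hδ : δᵀ * symplJ (ZMod N) g * δ = symplJ (ZMod N) g) :
    ∃ γ : Matrix (Fin g ⊕ Fin g) (Fin g ⊕ Fin g) ℤ,
      γᵀ * symplJ ℤ g * γ = symplJ ℤ g ∧
      γ.map (Int.cast : ℤ → ZMod N) = δ :=
  sp_reduction_surjective_general g N hN δ hδ
end
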